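/- (L¹ stability) Let p ∈ [1,∞), d ≥ 1, and let μ and μ̃ be finite Borel measures of equal total mass, both supported in a cube D ⊂ ℝ^d of side length L. Then for every positive integer N and every positive integer K with K^d ≤ N, W_p(μ̃, Δ_N)^p ≤ W_p(μ, Δ_{N−K^d})^p + |μ − μ̃|_{TV} · (L√d / (2K))^p, where |μ − μ̃|_{TV} denotes the total variation distance between μ and μ̃. -/

import Mathlib

open MeasureTheory Metric Filter
open scoped ENNReal

noncomputable section

/-- A transport plan (coupling) between two measures. -/
def IsCoupling {X : Type*} [MeasurableSpace X] (μ ν : Measure X) (π : Measure (X × X)) : Prop :=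
  π.map Prod.fst = μ ∧ π.map Prod.snd = ν

/-- The `L^p` Wasserstein distance between two measures of equal mass. -/
def Wp {X : Type*} [PseudoMetricSpace X] [MeasurableSpace X] (p : ℝ) (μ ν : Measure X) : ℝ≥0∞ :=
  ⨅ (π : Measure (X × X)) (_ : IsCoupling μ ν π),
    (∫⁻ z, edist z.1 z.2 ^ p ∂π) ^ (1 / p)

/-- A measure is supported on at most `N` points. -/
def FinSupported {X : Type*} [MeasurableSpace X] (N : ℕ) (ν : Measure X) : Prop :=
  ∃ S : Finset X, S.card ≤ N ∧ ν ((S : Set X))ᶜ = 0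

/-- The `L^p` Wasserstein distance from `μ` to the set `Δ_N` of measures supported
on at most `N` points and having the same total mass as `μ`. -/
def WpDelta {X : Type*} [PseudoMetricSpace X] [MeasurableSpace X]
    (p : ℝ) (μ : Measure X) (N : ℕ) : ℝ≥0∞ :=
  ⨅ (ν : Measure X) (_ : FinSupported N ν ∧ ν Set.univ = μ Set.univ), Wp p μ ν

/-- The (topological) support of a measure: points all of whose open neighborhoods
have positive measure. -/
def measSupport {X : Type*} [TopologicalSpace X] [MeasurableSpace X] (μ : Measure X) : Set X :=
  {x | ∀ U : Set X, IsOpen U → x ∈ U → 0 < μ U}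

/-!
Split `μ' = σ + τ` with `σ ≤ μ` and `τ = μ' - μ`, whose mass is at most `|μ - μ'|_TV`.
Given `ν ∈ Δ_{N - K^d}` and a plan `π` from `μ` to `ν`, reweighting `π` by `dσ/dμ` in the first
variable transports `σ` onto a part of `ν` at cost at most that of `π`, while `τ` is sent to the
centres of the `K^d` cells of side `L / K` of the cube, each point moving by at most
half the diagonal `L √d / (2K)` of its cell. The two targets together charge at most `N` points.
-/

lemma ENNReal.iInf_rpow {ι : Sort*} (f : ι → ℝ≥0∞) {p : ℝ} (hp : 0 < p) :
    (⨅ i, f i) ^ p = ⨅ i, f i ^ p :=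
  (ENNReal.orderIsoRpow p hp).map_iInf f

namespace MeasureTheory.Measure

variable {X : Type*} [MeasurableSpace X]

lemma sub_le_totalVariation (μ μ' : Measure X) [IsFiniteMeasure μ] [IsFiniteMeasure μ'] :
    μ' - μ ≤ (μ.toSignedMeasure - μ'.toSignedMeasure).totalVariation := by
  simp only [SignedMeasure.totalVariation, toJordanDecomposition_toSignedMeasure_sub,
    jordanDecompositionOfToSignedMeasureSub_negPart]
  exact Measure.le_add_left le_rfl

lemma exists_le_map_fst_eq_of_le {Y : Type*} [MeasurableSpace Y]
    {π : Measure (X × Y)} {μ σ : Measure X} [IsFiniteMeasure μ]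
    (hπ : π.map Prod.fst = μ) (hσ : σ ≤ μ) :
    ∃ π₁ ≤ π, π₁.map Prod.fst = σ := by
  have : IsFiniteMeasure σ := isFiniteMeasure_of_le μ hσ
  -- truncating at `1` gives `π₁ ≤ π` everywhere, not only `μ`-a.e. in the first variable
  set g : X → ℝ≥0∞ := fun x => min (σ.rnDeriv μ x) 1
  have hg : Measurable g := (measurable_rnDeriv σ μ).min measurable_const
  have hgσ : μ.withDensity g = σ := by
    have hg_ae : g =ᵐ[μ] σ.rnDeriv μ :=
      (rnDeriv_le_one_of_le hσ).mono fun x hx => min_eq_left hx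
    rw [withDensity_congr_ae hg_ae,
      withDensity_rnDeriv_eq σ μ (absolutelyContinuous_of_le hσ)]
  refine ⟨π.withDensity fun z => g z.1, ?_, ?_⟩
  · calc π.withDensity (fun z => g z.1) ≤ π.withDensity 1 :=
          withDensity_mono (ae_of_all _ fun z => min_le_right _ _)
      _ = π := withDensity_one
  · ext A hA
    rw [map_apply measurable_fst hA, withDensity_apply _ (measurable_fst hA),
      ← setLIntegral_map hA hg measurable_fst, hπ, ← withDensity_apply _ hA, hgσ]

end MeasureTheory.Measure

section Transport

variable {X : Type*} [MeasurableSpace X]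

lemma IsCoupling.measure_univ_eq {μ ν : Measure X} {π : Measure (X × X)}
    (hπ : IsCoupling μ ν π) : ν Set.univ = μ Set.univ := by
  rw [← hπ.1, ← hπ.2, Measure.map_apply measurable_fst MeasurableSet.univ,
    Measure.map_apply measurable_snd MeasurableSet.univ, Set.preimage_univ, Set.preimage_univ]

lemma IsCoupling.add {μ₁ μ₂ ν₁ ν₂ : Measure X} {π₁ π₂ : Measure (X × X)}
    (h₁ : IsCoupling μ₁ ν₁ π₁) (h₂ : IsCoupling μ₂ ν₂ π₂) :
    IsCoupling (μ₁ + μ₂) (ν₁ + ν₂) (π₁ + π₂) :=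
  ⟨by rw [Measure.map_add _ _ measurable_fst, h₁.1, h₂.1],
    by rw [Measure.map_add _ _ measurable_snd, h₁.2, h₂.2]⟩

lemma isCoupling_map_prodMk {T : X → X} (hT : Measurable T) (τ : Measure X) :
    IsCoupling τ (τ.map T) (τ.map fun x => (x, T x)) := by
  have hgraph : Measurable fun x => (x, T x) := measurable_id.prodMk hT
  exact ⟨by rw [Measure.map_map measurable_fst hgraph]; exact Measure.map_id,
    by rw [Measure.map_map measurable_snd hgraph]; rfl⟩

lemma FinSupported.mono {M N : ℕ} {ν₁ ν : Measure X} (hMN : M ≤ N) (hν : ν₁ ≤ ν)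
    (h : FinSupported M ν) : FinSupported N ν₁ :=
  let ⟨S, hS, hνS⟩ := h
  ⟨S, hS.trans hMN, Measure.absolutelyContinuous_of_le hν hνS⟩

lemma FinSupported.add {M N : ℕ} {ν₁ ν₂ : Measure X} (h₁ : FinSupported M ν₁)
    (h₂ : FinSupported N ν₂) : FinSupported (M + N) (ν₁ + ν₂) := by
  classical
  obtain ⟨S₁, hS₁, hν₁⟩ := h₁
  obtain ⟨S₂, hS₂, hν₂⟩ := h₂
  refine ⟨S₁ ∪ S₂, (Finset.card_union_le _ _).trans (add_le_add hS₁ hS₂), ?_⟩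
  rw [Measure.add_apply, Finset.coe_union, Set.compl_union,
    measure_mono_null Set.inter_subset_left hν₁, measure_mono_null Set.inter_subset_right hν₂,
    add_zero]

lemma finSupported_map [MeasurableSingletonClass X] {T : X → X} (hT : Measurable T)
    {G : Finset X} (hTG : ∀ x, T x ∈ G) (τ : Measure X) : FinSupported G.card (τ.map T) := by
  refine ⟨G, le_rfl, ?_⟩
  rw [Measure.map_apply hT G.finite_toSet.measurableSet.compl]
  simp [Set.preimage, hTG]

end Transport

section Wasserstein

variable {X : Type*} [PseudoMetricSpace X] [MeasurableSpace X] {p : ℝ}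

lemma Wp_rpow (hp : 0 < p) (μ ν : Measure X) :
    Wp p μ ν ^ p = ⨅ (π : Measure (X × X)) (_ : IsCoupling μ ν π), ∫⁻ z, edist z.1 z.2 ^ p ∂π := by
  simp only [Wp, ENNReal.iInf_rpow _ hp, ← ENNReal.rpow_mul, one_div_mul_cancel hp.ne',
    ENNReal.rpow_one]

lemma WpDelta_rpow_le_lintegral (hp : 0 < p) {μ ν : Measure X} {N : ℕ} {π : Measure (X × X)}
    (hν : FinSupported N ν) (hπ : IsCoupling μ ν π) :
    WpDelta p μ N ^ p ≤ ∫⁻ z, edist z.1 z.2 ^ p ∂π :=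
  calc WpDelta p μ N ^ p ≤ Wp p μ ν ^ p :=
        ENNReal.rpow_le_rpow (iInf₂_le ν ⟨hν, hπ.measure_univ_eq⟩) hp.le
    _ ≤ ∫⁻ z, edist z.1 z.2 ^ p ∂π := (Wp_rpow hp μ ν).trans_le (iInf₂_le π hπ)

lemma le_WpDelta_rpow_add (hp : 0 < p) {μ : Measure X} {N : ℕ} {a C : ℝ≥0∞}
    (h : ∀ ν, FinSupported N ν → ∀ π, IsCoupling μ ν π → a ≤ (∫⁻ z, edist z.1 z.2 ^ p ∂π) + C) :
    a ≤ WpDelta p μ N ^ p + C := by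
  simp only [WpDelta, ENNReal.iInf_rpow _ hp, Wp_rpow hp, ENNReal.iInf_add, le_iInf_iff]
  exact fun ν hν π hπ => h ν hν.1 π hπ

lemma lintegral_edist_rpow_map_prodMk_le {T : X → X} {τ : Measure X}
    {D : Set X} (hτD : τ Dᶜ = 0) {B : ℝ≥0∞} (hTB : ∀ x ∈ D, edist x (T x) ^ p ≤ B) :
    ∫⁻ z, edist z.1 z.2 ^ p ∂(τ.map fun x => (x, T x)) ≤ τ Set.univ * B :=
  calc ∫⁻ z, edist z.1 z.2 ^ p ∂(τ.map fun x => (x, T x))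
      ≤ ∫⁻ x, edist x (T x) ^ p ∂τ := lintegral_map_le _ _
    _ ≤ ∫⁻ _, B ∂τ := lintegral_mono_ae (measure_eq_zero_iff_ae_notMem.1 hτD |>.mono
        fun x hx => hTB x (not_not.1 hx))
    _ = τ Set.univ * B := by rw [lintegral_const, mul_comm]

theorem WpDelta_rpow_le_add_of_quantizer [MeasurableSingletonClass X] (hp : 0 < p)
    {μ μ' : Measure X} [IsFiniteMeasure μ] [IsFiniteMeasure μ'] {D : Set X} (hμ'D : μ' Dᶜ = 0)
    {T : X → X} (hT : Measurable T) {G : Finset X} (hTG : ∀ x, T x ∈ G)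
    {B : ℝ≥0∞} (hTB : ∀ x ∈ D, edist x (T x) ^ p ≤ B) {M N : ℕ} (hMN : M + G.card ≤ N) :
    WpDelta p μ' N ^ p ≤ WpDelta p μ M ^ p + (μ' - μ) Set.univ * B := by
  set τ := μ' - μ
  have hτμ' : τ ≤ μ' := Measure.sub_le
  have hστ : μ' - τ + τ = μ' := Measure.sub_add_cancel_of_le hτμ'
  have hσμ : μ' - τ ≤ μ := Measure.sub_le_iff_le_add.2 <| by
    rw [add_comm]; exact Measure.sub_le_iff_le_add.1 le_rfl
  refine le_WpDelta_rpow_add hp fun ν hν π hπ => ?_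
  obtain ⟨π₁, hπ₁π, hπ₁⟩ := Measure.exists_le_map_fst_eq_of_le hπ.1 hσμ
  have hcoup : IsCoupling μ' (π₁.map Prod.snd + τ.map T) (π₁ + τ.map fun x => (x, T x)) := by
    rw [← hστ]; exact IsCoupling.add ⟨hπ₁, rfl⟩ (isCoupling_map_prodMk hT τ)
  have hfin : FinSupported N (π₁.map Prod.snd + τ.map T) :=
    ((hν.mono le_rfl (hπ.2 ▸ Measure.map_mono hπ₁π measurable_snd)).add
      (finSupported_map hT hTG τ)).mono hMN le_rfl
  calc WpDelta p μ' N ^ p ≤ ∫⁻ z, edist z.1 z.2 ^ p ∂(π₁ + τ.map fun x => (x, T x)) :=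
        WpDelta_rpow_le_lintegral hp hfin hcoup
    _ = (∫⁻ z, edist z.1 z.2 ^ p ∂π₁) + ∫⁻ z, edist z.1 z.2 ^ p ∂(τ.map fun x => (x, T x)) :=
        lintegral_add_measure _ _ _
    _ ≤ (∫⁻ z, edist z.1 z.2 ^ p ∂π) + τ Set.univ * B :=
        add_le_add (lintegral_mono' hπ₁π le_rfl) (lintegral_edist_rpow_map_prodMk_le
          (Measure.absolutelyContinuous_of_le hτμ' hμ'D) hTB)

end Wasserstein

section Grid

/-- The top face `t = K * r` is put into the last of the `K` cells. -/
def gridIndex (K : ℕ) (r t : ℝ) : ℕ := min (K - 1) ⌊t / r⌋₊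

lemma gridIndex_lt {K : ℕ} (hK : 0 < K) (r t : ℝ) : gridIndex K r t < K :=
  (min_le_left _ _).trans_lt (Nat.sub_lt hK one_pos)

lemma gridIndex_mul_le (K : ℕ) {r t : ℝ} (hr : 0 < r) (ht : 0 ≤ t) : gridIndex K r t * r ≤ t :=
  calc (gridIndex K r t : ℝ) * r ≤ ⌊t / r⌋₊ * r := by
        gcongr; exact_mod_cast min_le_right _ _
    _ ≤ t / r * r := by gcongr; exact Nat.floor_le (by positivity)
    _ = t := div_mul_cancel₀ t hr.ne'

lemma le_gridIndex_add_one_mul {K : ℕ} (hK : 0 < K) {r t : ℝ} (hr : 0 < r) (htK : t ≤ K * r) :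
    t ≤ (gridIndex K r t + 1) * r := by
  rcases min_cases (K - 1) ⌊t / r⌋₊ with ⟨h, -⟩ | ⟨h, -⟩
  · rwa [gridIndex, h, Nat.cast_sub hK, Nat.cast_one, sub_add_cancel]
  · rw [gridIndex, h, ← div_le_iff₀ hr]
    exact (Nat.lt_floor_add_one _).le

lemma abs_sub_gridIndex_le {K : ℕ} (hK : 0 < K) {r t : ℝ} (hr : 0 < r) (ht : 0 ≤ t)
    (htK : t ≤ K * r) : |t - (gridIndex K r t + 1 / 2) * r| ≤ r / 2 := by
  have h₁ := gridIndex_mul_le K hr ht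
  have h₂ := le_gridIndex_add_one_mul hK hr htK
  rw [abs_le]
  constructor <;> linarith

variable {d : ℕ}

def gridSnap (c : Fin d → ℝ) (L : ℝ) (K : ℕ) (x : EuclideanSpace ℝ (Fin d)) :
    EuclideanSpace ℝ (Fin d) :=
  WithLp.toLp 2 fun i => c i + (gridIndex K (L / K) (x i - c i) + 1 / 2) * (L / K)

def gridCenters (c : Fin d → ℝ) (L : ℝ) (K : ℕ) : Finset (EuclideanSpace ℝ (Fin d)) :=
  (Fintype.piFinset fun _ => Finset.range K).image
    fun k => WithLp.toLp 2 fun i => c i + (k i + 1 / 2) * (L / K)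

lemma card_gridCenters_le (c : Fin d → ℝ) (L : ℝ) (K : ℕ) : (gridCenters c L K).card ≤ K ^ d :=
  Finset.card_image_le.trans_eq (by simp)

lemma gridSnap_mem_gridCenters {K : ℕ} (hK : 0 < K) (c : Fin d → ℝ) (L : ℝ)
    (x : EuclideanSpace ℝ (Fin d)) : gridSnap c L K x ∈ gridCenters c L K :=
  Finset.mem_image.2 ⟨fun i => gridIndex K (L / K) (x i - c i),
    Fintype.mem_piFinset.2 fun _ => Finset.mem_range.2 (gridIndex_lt hK _ _), rfl⟩

lemma measurable_gridSnap (c : Fin d → ℝ) (L : ℝ) (K : ℕ) : Measurable (gridSnap c L K) := by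
  refine (MeasurableEquiv.toLp 2 (Fin d → ℝ)).measurable.comp (measurable_pi_lambda _ fun i => ?_)
  have hxi : Measurable fun x : EuclideanSpace ℝ (Fin d) => x i :=
    (measurable_pi_apply i).comp (MeasurableEquiv.toLp 2 (Fin d → ℝ)).symm.measurable
  exact (measurable_from_top (f := fun n : ℕ => c i + (min (K - 1) n + 1 / 2) * (L / K))).comp
    (Nat.measurable_floor.comp ((hxi.sub_const _).div_const _))

lemma dist_gridSnap_le {K : ℕ} (hK : 0 < K) {L : ℝ} (hL : 0 < L) {c : Fin d → ℝ}
    {x : EuclideanSpace ℝ (Fin d)} (hx : ∀ i, x i ∈ Set.Icc (c i) (c i + L)) :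
    dist x (gridSnap c L K x) ≤ L * √d / (2 * K) := by
  have hK' : (0 : ℝ) < K := Nat.cast_pos.2 hK
  have hcoord : ∀ i, dist (x i) (gridSnap c L K x i) ≤ L / K / 2 := fun i => by
    rw [Real.dist_eq, gridSnap, PiLp.toLp_apply, sub_add_eq_sub_sub]
    refine abs_sub_gridIndex_le hK (div_pos hL hK') (sub_nonneg.2 (hx i).1) ?_
    rw [mul_div_cancel₀ _ hK'.ne']
    linarith [(hx i).2]
  calc dist x (gridSnap c L K x) = √(∑ i, dist (x i) (gridSnap c L K x i) ^ 2) :=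
        EuclideanSpace.dist_eq _ _
    _ ≤ √(∑ _i : Fin d, (L / K / 2) ^ 2) := by gcongr with i; exact hcoord i
    _ = L * √d / (2 * K) := by
        rw [Finset.sum_const, Finset.card_univ, Fintype.card_fin, nsmul_eq_mul,
          Real.sqrt_mul (Nat.cast_nonneg d), Real.sqrt_sq (by positivity)]
        field_simp

end Grid

theorem l1_stability_general
    (d : ℕ) (p : ℝ) (hp : 1 ≤ p)
    (L : ℝ) (hL : 0 < L) (c : Fin d → ℝ)
    (D : Set (EuclideanSpace ℝ (Fin d)))
    (hD : D = {x : EuclideanSpace ℝ (Fin d) | ∀ i, x i ∈ Set.Icc (c i) (c i + L)})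
    (μ μ' : Measure (EuclideanSpace ℝ (Fin d))) [IsFiniteMeasure μ] [IsFiniteMeasure μ']
    (hμ'D : μ' Dᶜ = 0)
    (N K : ℕ) (hK : 0 < K) (hKN : K ^ d ≤ N) :
    WpDelta p μ' N ^ p ≤ WpDelta p μ (N - K ^ d) ^ p +
      (μ.toSignedMeasure - μ'.toSignedMeasure).totalVariation Set.univ *
        ENNReal.ofReal ((L * Real.sqrt d / (2 * K)) ^ p) := by
  have hp0 : 0 < p := zero_lt_one.trans_le hp
  have hsnap : ∀ x ∈ D,
      edist x (gridSnap c L K x) ^ p ≤ ENNReal.ofReal ((L * Real.sqrt d / (2 * K)) ^ p) := by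
    intro x hx
    rw [hD] at hx
    rw [edist_dist, ENNReal.ofReal_rpow_of_nonneg dist_nonneg hp0.le]
    exact ENNReal.ofReal_le_ofReal
      (Real.rpow_le_rpow dist_nonneg (dist_gridSnap_le hK hL hx) hp0.le)
  have hcard : N - K ^ d + (gridCenters c L K).card ≤ N := by
    have := card_gridCenters_le c L K
    omega
  calc WpDelta p μ' N ^ p ≤ WpDelta p μ (N - K ^ d) ^ p +
        (μ' - μ) Set.univ * ENNReal.ofReal ((L * Real.sqrt d / (2 * K)) ^ p) :=
        WpDelta_rpow_le_add_of_quantizer hp0 hμ'D (measurable_gridSnap c L K)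
          (gridSnap_mem_gridCenters hK c L) hsnap hcard
    _ ≤ _ := by gcongr; exact Measure.sub_le_totalVariation μ μ'

theorem l1_stability
    (d : ℕ) (hd : 1 ≤ d) (p : ℝ) (hp : 1 ≤ p)
    (L : ℝ) (hL : 0 < L) (c : Fin d → ℝ)
    (D : Set (EuclideanSpace ℝ (Fin d)))
    (hD : D = {x : EuclideanSpace ℝ (Fin d) | ∀ i, x i ∈ Set.Icc (c i) (c i + L)})
    (μ μ' : Measure (EuclideanSpace ℝ (Fin d))) [IsFiniteMeasure μ] [IsFiniteMeasure μ']
    (hμD : μ Dᶜ = 0) (hμ'D : μ' Dᶜ = 0)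
    (hmass : μ Set.univ = μ' Set.univ)
    (N K : ℕ) (hN : 0 < N) (hK : 0 < K) (hKN : K ^ d ≤ N) :
    WpDelta p μ' N ^ p ≤ WpDelta p μ (N - K ^ d) ^ p +
      (μ.toSignedMeasure - μ'.toSignedMeasure).totalVariation Set.univ *
        ENNReal.ofReal ((L * Real.sqrt d / (2 * K)) ^ p) :=
  l1_stability_general d p hp L hL c D hD μ μ' hμ'D N K hK hKN
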